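/- arXiv:1902.08440 — 3 statements merged into one kernel-verified Lean document; each statement's English description precedes it below -/
import Mathlib

section
/- Under the hypotheses of the doubly-indexed setting (pairwise variables $Z_{ij}$ with $Z_{ij}$ independent of $Z_{kl}$ when the index pairs are disjoint, and $E(h(Z_{ij})^2) < \infty$), the average converges in probability: $\frac{1}{|\mathcal{I}_n|}\sum_{(i,j)\in\mathcal{I}_n} h(Z_{ij}) - \frac{1}{|\mathcal{I}_n|}\sum_{(i,j)\in\mathcal{I}_n} E(h(Z_{ij})) = O_p(1/\sqrt{n})$; in particular, for every $\epsilon > 0$, $P\left( \left| \frac{1}{|\mathcal{I}_n|}\sum_{(i,j)} (h(Z_{ij}) - E h(Z_{ij})) \right| > \epsilon \right) \to 0$ as $n \to \infty$. -/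
open MeasureTheory ProbabilityTheory Finset Filter

/-!
Each `h (Z i j)` is independent of all but the `O(n)` summands whose index pair meets `{i, j}`,
so in the variance of the sum over the `n (n - 1) / 2` pairs only `O(n³)` covariances survive,
each bounded by `C`. The average therefore has variance `O(C / n)`, and Chebyshev's inequality
finishes the proof.
-/

/-- The index set `{(i,j) : 0 ≤ i < j < n}` of pairs. -/
def pairIdx (n : ℕ) : Finset (ℕ × ℕ) :=
  (Finset.range n ×ˢ Finset.range n).filter (fun p => p.1 < p.2)

section DependencyNeighbourhood

variable {Ω ι : Type*} [MeasurableSpace Ω] {μ : Measure Ω} [IsFiniteMeasure μ]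

lemma covariance_le_half_add_variance {X Y : Ω → ℝ} (hX : MemLp X 2 μ) (hY : MemLp Y 2 μ) :
    cov[X, Y; μ] ≤ (Var[X; μ] + Var[Y; μ]) / 2 := by
  have := variance_nonneg (X - Y) μ
  rw [variance_sub hX hY] at this
  linarith

lemma variance_sum_le_of_indepFun_of_notMem {s : Finset ι} {X : ι → Ω → ℝ} {N : ι → Finset ι}
    {C : ℝ} {m : ℕ} (hX : ∀ i ∈ s, MemLp (X i) 2 μ)
    (hindep : ∀ i ∈ s, ∀ j ∈ s, j ∉ N i → X i ⟂ᵢ[μ] X j)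
    (hC : ∀ i ∈ s, Var[X i; μ] ≤ C) (hN : ∀ i ∈ s, #(N i) ≤ m) :
    Var[∑ i ∈ s, X i; μ] ≤ #s * m * C := by
  classical
  have hrow : ∀ i ∈ s, ∑ j ∈ s, cov[X i, X j; μ] ≤ m * C := by
    intro i hi
    have hC0 : 0 ≤ C := (variance_nonneg _ _).trans (hC i hi)
    calc ∑ j ∈ s, cov[X i, X j; μ] = ∑ j ∈ s with j ∈ N i, cov[X i, X j; μ] := by
          refine (sum_filter_of_ne fun j hj hne => ?_).symm
          by_contra hj'
          exact hne ((hindep i hi j hj hj').covariance_eq_zero (hX i hi) (hX j hj))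
      _ ≤ #{j ∈ s | j ∈ N i} • C := by
          refine sum_le_card_nsmul _ _ _ fun j hj => ?_
          have hj := (mem_filter.mp hj).1
          linarith [covariance_le_half_add_variance (hX i hi) (hX j hj), hC i hi, hC j hj]
      _ ≤ m * C := by
          rw [nsmul_eq_mul]
          gcongr
          exact_mod_cast (card_le_card fun j hj => (mem_filter.mp hj).2).trans (hN i hi)
  calc Var[∑ i ∈ s, X i; μ] = ∑ i ∈ s, ∑ j ∈ s, cov[X i, X j; μ] := variance_sum' hX
    _ ≤ #s • (m * C) := sum_le_card_nsmul _ _ _ hrow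
    _ = #s * m * C := by rw [nsmul_eq_mul, mul_assoc]

lemma measure_lt_abs_average_sub_integral_le {s : Finset ι} {X : ι → Ω → ℝ} {N : ι → Finset ι}
    {C ε : ℝ} {m : ℕ} (hX : ∀ i ∈ s, MemLp (X i) 2 μ)
    (hindep : ∀ i ∈ s, ∀ j ∈ s, j ∉ N i → X i ⟂ᵢ[μ] X j)
    (hC : ∀ i ∈ s, Var[X i; μ] ≤ C) (hN : ∀ i ∈ s, #(N i) ≤ m) (hε : 0 < ε) :
    μ {ω | ε < |(#s : ℝ)⁻¹ * ∑ i ∈ s, (X i ω - ∫ ω', X i ω' ∂μ)|}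
      ≤ ENNReal.ofReal ((#s : ℝ)⁻¹ * m * C / ε ^ 2) := by
  have hS : MemLp (fun ω => ∑ i ∈ s, X i ω) 2 μ := memLp_finsetSum s hX
  have hmean : ∫ ω, (#s : ℝ)⁻¹ * ∑ i ∈ s, X i ω ∂μ = (#s : ℝ)⁻¹ * ∑ i ∈ s, ∫ ω, X i ω ∂μ := by
    rw [integral_const_mul, integral_finsetSum s fun i hi => (hX i hi).integrable one_le_two]
  have hvar : Var[fun ω => (#s : ℝ)⁻¹ * ∑ i ∈ s, X i ω; μ] ≤ (#s : ℝ)⁻¹ * m * C := by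
    rw [variance_const_mul]
    calc ((#s : ℝ)⁻¹) ^ 2 * Var[fun ω => ∑ i ∈ s, X i ω; μ]
        ≤ ((#s : ℝ)⁻¹) ^ 2 * (#s * m * C) := by
          gcongr
          simpa only [← Finset.sum_apply] using
            variance_sum_le_of_indepFun_of_notMem hX hindep hC hN
      _ = (#s : ℝ)⁻¹ * m * C := by
          rcases (#s).eq_zero_or_pos with hs | hs
          · simp [hs]
          · field_simp
  calc μ {ω | ε < |(#s : ℝ)⁻¹ * ∑ i ∈ s, (X i ω - ∫ ω', X i ω' ∂μ)|}
      ≤ μ {ω | ε ≤ |(#s : ℝ)⁻¹ * ∑ i ∈ s, X i ω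
          - ∫ ω', (#s : ℝ)⁻¹ * ∑ i ∈ s, X i ω' ∂μ|} := by
        refine measure_mono fun ω hω => ?_
        simp only [Set.mem_ofPred_eq, hmean, sum_sub_distrib, mul_sub] at hω ⊢
        exact hω.le
    _ ≤ ENNReal.ofReal (Var[fun ω => (#s : ℝ)⁻¹ * ∑ i ∈ s, X i ω; μ] / ε ^ 2) :=
        meas_ge_le_variance_div_sq (hS.const_mul _) hε
    _ ≤ ENNReal.ofReal ((#s : ℝ)⁻¹ * m * C / ε ^ 2) := by gcongr

end DependencyNeighbourhood

lemma card_pairIdx_mul_two (n : ℕ) : #(pairIdx n) * 2 = n * (n - 1) := by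
  have hfiber : ∀ j ∈ range n, #{i ∈ range n | i < j} = j := fun j hj => by
    rw [show {i ∈ range n | i < j} = range j by ext i; simp at hj ⊢; omega, card_range]
  rw [pairIdx, card_filter, sum_product_right, ← sum_range_id_mul_two]
  congr 1
  exact sum_congr rfl fun j hj => by rw [← card_filter, hfiber j hj]

lemma tendsto_inv_card_pairIdx_mul_self :
    Tendsto (fun n : ℕ => (#(pairIdx n) : ℝ)⁻¹ * n) atTop (nhds 0) := by
  have hsub : Tendsto (fun n : ℕ => 2 * ((n : ℝ) - 1)⁻¹) atTop (nhds 0) := by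
    simpa [← sub_eq_add_neg] using (tendsto_inv_atTop_zero.comp
      (tendsto_atTop_add_const_right atTop (-1 : ℝ) tendsto_natCast_atTop_atTop)).const_mul 2
  refine hsub.congr' ?_
  filter_upwards [eventually_ge_atTop 2] with n hn
  have hcard : (#(pairIdx n) : ℝ) * 2 = n * (n - 1) := by
    have := congrArg (Nat.cast (R := ℝ)) (card_pairIdx_mul_two n)
    push_cast [Nat.cast_sub (by omega : 1 ≤ n)] at this
    exact this
  have hn' : (2 : ℝ) ≤ n := by exact_mod_cast hn
  rw [show (#(pairIdx n) : ℝ) = n * (n - 1) / 2 by linarith]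
  field_simp

def pairsMeeting (n : ℕ) (p : ℕ × ℕ) : Finset (ℕ × ℕ) :=
  ({p.1, p.2} ×ˢ range n) ∪ (range n ×ˢ {p.1, p.2})

lemma card_pairsMeeting_le (n : ℕ) (p : ℕ × ℕ) : #(pairsMeeting n p) ≤ 4 * n := by
  have hp : #({p.1, p.2} : Finset ℕ) ≤ 2 := Finset.card_le_two
  calc #(pairsMeeting n p)
      ≤ #(({p.1, p.2} : Finset ℕ) ×ˢ range n) + #(range n ×ˢ ({p.1, p.2} : Finset ℕ)) :=
        card_union_le _ _
    _ = #({p.1, p.2} : Finset ℕ) * n + n * #({p.1, p.2} : Finset ℕ) := by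
        rw [card_product, card_product, card_range]
    _ ≤ 4 * n := by nlinarith

lemma inter_eq_empty_of_notMem_pairsMeeting {n : ℕ} {p q : ℕ × ℕ} (hq : q ∈ pairIdx n)
    (hpq : q ∉ pairsMeeting n p) : ({p.1, p.2} : Set ℕ) ∩ {q.1, q.2} = ∅ := by
  simp only [pairIdx, pairsMeeting, mem_filter, mem_product, mem_range, mem_union, mem_insert,
    mem_singleton] at hq hpq
  ext x
  simp only [Set.mem_inter_iff, Set.mem_insert_iff, Set.mem_singleton_iff,
    Set.mem_empty_iff_false, iff_false, not_and]
  rintro (h1 | h1) (h2 | h2) <;> omega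

theorem stmt1_general
    {Ω : Type*} [MeasureSpace Ω] [IsProbabilityMeasure (ℙ : Measure Ω)]
    (Z : ℕ → ℕ → Ω → ℝ) (h : ℝ → ℝ) (hm : Measurable h)
    (hL2 : ∀ i j, MemLp (fun ω => h (Z i j ω)) 2 ℙ)
    (hindep : ∀ i j k l, ({i, j} : Set ℕ) ∩ ({k, l} : Set ℕ) = ∅ →
      IndepFun (Z i j) (Z k l) ℙ)
    (C : ℝ)
    (hC : ∀ i j, ∫ ω, (h (Z i j ω)) ^ 2 ∂ℙ ≤ C) :
    ∀ ε : ℝ, 0 < ε →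
      Tendsto (fun n : ℕ =>
        ℙ {ω | ε < |((pairIdx n).card : ℝ)⁻¹ *
          ∑ p ∈ pairIdx n, (h (Z p.1 p.2 ω) - ∫ ω', h (Z p.1 p.2 ω') ∂ℙ)|})
        atTop (nhds 0) := by
  intro ε hε
  have hvar : ∀ p : ℕ × ℕ, Var[fun ω => h (Z p.1 p.2 ω); ℙ] ≤ C := fun p =>
    (variance_le_expectation_sq (hL2 p.1 p.2).aestronglyMeasurable).trans (hC p.1 p.2)
  have hindep_pairs : ∀ n, ∀ p ∈ pairIdx n, ∀ q ∈ pairIdx n, q ∉ pairsMeeting n p →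
      (fun ω => h (Z p.1 p.2 ω)) ⟂ᵢ[ℙ] (fun ω => h (Z q.1 q.2 ω)) := fun n p _ q hq hpq =>
    (hindep _ _ _ _ (inter_eq_empty_of_notMem_pairsMeeting hq hpq)).comp hm hm
  have hbound : ∀ n : ℕ, ℙ {ω | ε < |((pairIdx n).card : ℝ)⁻¹ *
      ∑ p ∈ pairIdx n, (h (Z p.1 p.2 ω) - ∫ ω', h (Z p.1 p.2 ω') ∂ℙ)|}
        ≤ ENNReal.ofReal ((#(pairIdx n) : ℝ)⁻¹ * n * (4 * C / ε ^ 2)) := fun n => by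
    have := measure_lt_abs_average_sub_integral_le (X := fun p ω => h (Z p.1 p.2 ω))
      (s := pairIdx n) (N := pairsMeeting n) (fun p _ => hL2 p.1 p.2) (hindep_pairs n)
      (fun p _ => hvar p) (fun p _ => card_pairsMeeting_le n p) hε
    refine this.trans_eq ?_
    congr 1
    push_cast
    ring
  have hlim := ENNReal.tendsto_ofReal
    (tendsto_inv_card_pairIdx_mul_self.mul_const (4 * C / ε ^ 2))
  rw [zero_mul, ENNReal.ofReal_zero] at hlim
  exact tendsto_of_tendsto_of_tendsto_of_le_of_le tendsto_const_nhds hlim (fun _ => zero_le)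
    hbound

/-- Law of large numbers for doubly-indexed partially-dependent random variables:
the centered average converges to `0` in probability. -/
theorem stmt1
    {Ω : Type*} [MeasureSpace Ω] [IsProbabilityMeasure (ℙ : Measure Ω)]
    (Z : ℕ → ℕ → Ω → ℝ) (h : ℝ → ℝ) (hm : Measurable h)
    (hZm : ∀ i j, Measurable (Z i j))
    (hL2 : ∀ i j, MemLp (fun ω => h (Z i j ω)) 2 ℙ)
    (hindep : ∀ i j k l, ({i, j} : Set ℕ) ∩ ({k, l} : Set ℕ) = ∅ →
      IndepFun (Z i j) (Z k l) ℙ)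
    (C : ℝ)
    (hC : ∀ i j, ∫ ω, (h (Z i j ω)) ^ 2 ∂ℙ ≤ C) :
    ∀ ε : ℝ, 0 < ε →
      Tendsto (fun n : ℕ =>
        ℙ {ω | ε < |((pairIdx n).card : ℝ)⁻¹ *
          ∑ p ∈ pairIdx n, (h (Z p.1 p.2 ω) - ∫ ω', h (Z p.1 p.2 ω') ∂ℙ)|})
        atTop (nhds 0) :=
  stmt1_general Z h hm hL2 hindep C hC
end

section
/- Combine the decomposition and the Lyapunov bound: under assumptions (a) $g = \mu_* + \eta_*$ with $\mu_*,\eta_* \ge 0$, (b) $\alpha := E_\nu(\eta_*) > 0$, (c) $E_\nu(\eta_* \mu_\theta^{\beta_0}) < \varepsilon$, and (d) $0 < \beta \le \beta_0$, the moment $\beta$-score satisfies $\left| u_\beta(g,\mu_\theta;\nu) - u_\beta(\mu_*,\mu_\theta;\nu) - \alpha\beta^{-1} \right| \le \alpha^{1-\beta/\beta_0}\,\beta^{-1}\,\varepsilon^{\beta/\beta_0}$. -/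
open MeasureTheory

/-- The β-score `u_β(g,f;ν)` over nonnegative functions. -/
noncomputable def uscore {Z : Type*} [MeasurableSpace Z] (ν : Measure Z)
    (β : ℝ) (g f : Z → ℝ) : ℝ :=
  ∫ z, (-(g z) * ((f z) ^ β - 1) / β + (f z) ^ (1 + β) / (1 + β)) ∂ν

/-!
The two scores differ pointwise by `η⋆ (1 - μ_θ^β) / β`, so the error term is exactly
`β⁻¹ E_ν(η⋆ μ_θ^β)`. Writing `η⋆ μ_θ^β = (η⋆ μ_θ^{β₀})^t η⋆^{1-t}` with `t = β/β₀`, Hölder's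
inequality with exponents `1/t, 1/(1-t)` (Lyapunov's inequality for the measure `η⋆ ν`)
bounds it by `(E_ν(η⋆ μ_θ^{β₀}))^t α^{1-t} ≤ ε^t α^{1-t}`.
-/

section Lyapunov

variable {α : Type*} [MeasurableSpace α] {μ : Measure α}

theorem integral_rpow_mul_rpow_le {f g : α → ℝ} (hf0 : 0 ≤ f) (hg0 : 0 ≤ g)
    (hf : Integrable f μ) (hg : Integrable g μ) {p q : ℝ} (hp : 0 ≤ p) (hq : 0 ≤ q)
    (hpq : p + q = 1) :
    ∫ a, f a ^ p * g a ^ q ∂μ ≤ (∫ a, f a ∂μ) ^ p * (∫ a, g a ∂μ) ^ q := by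
  have hmeas : AEStronglyMeasurable (fun a => f a ^ p * g a ^ q) μ :=
    ((hf.aemeasurable.pow_const p).mul (hg.aemeasurable.pow_const q)).aestronglyMeasurable
  rw [integral_eq_lintegral_of_nonneg_ae
    (ae_of_all _ fun a => mul_nonneg (Real.rpow_nonneg (hf0 a) p) (Real.rpow_nonneg (hg0 a) q))
    hmeas]
  refine ENNReal.toReal_le_of_le_ofReal (mul_nonneg (Real.rpow_nonneg (integral_nonneg hf0) p)
    (Real.rpow_nonneg (integral_nonneg hg0) q)) ?_
  calc ∫⁻ a, ENNReal.ofReal (f a ^ p * g a ^ q) ∂μ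
      = ∫⁻ a, ENNReal.ofReal (f a) ^ p * ENNReal.ofReal (g a) ^ q ∂μ := by
        simp_rw [ENNReal.ofReal_mul (Real.rpow_nonneg (hf0 _) p),
          ENNReal.ofReal_rpow_of_nonneg (hf0 _) hp, ENNReal.ofReal_rpow_of_nonneg (hg0 _) hq]
    _ ≤ (∫⁻ a, ENNReal.ofReal (f a) ∂μ) ^ p * (∫⁻ a, ENNReal.ofReal (g a) ∂μ) ^ q :=
        ENNReal.lintegral_mul_norm_pow_le hf.aemeasurable.ennreal_ofReal
          hg.aemeasurable.ennreal_ofReal hp hq hpq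
    _ = ENNReal.ofReal ((∫ a, f a ∂μ) ^ p * (∫ a, g a ∂μ) ^ q) := by
        rw [← ofReal_integral_eq_lintegral_ofReal hf (ae_of_all _ hf0),
          ← ofReal_integral_eq_lintegral_ofReal hg (ae_of_all _ hg0),
          ENNReal.ofReal_rpow_of_nonneg (integral_nonneg hf0) hp,
          ENNReal.ofReal_rpow_of_nonneg (integral_nonneg hg0) hq,
          ← ENNReal.ofReal_mul (Real.rpow_nonneg (integral_nonneg hf0) p)]

theorem integral_mul_rpow_le_lyapunov {w f : α → ℝ} (hw0 : 0 ≤ w) (hf0 : 0 ≤ f)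
    {p q : ℝ} (hp : 0 < p) (hq : 0 ≤ q) (hqp : q ≤ p)
    (hw : Integrable w μ) (hwf : Integrable (fun a => w a * f a ^ p) μ) :
    ∫ a, w a * f a ^ q ∂μ
      ≤ (∫ a, w a * f a ^ p ∂μ) ^ (q / p) * (∫ a, w a ∂μ) ^ (1 - q / p) := by
  have hsplit : ∀ a, w a * f a ^ q = (w a * f a ^ p) ^ (q / p) * w a ^ (1 - q / p) := by
    intro a
    rw [Real.mul_rpow (hw0 a) (Real.rpow_nonneg (hf0 a) p), ← Real.rpow_mul (hf0 a),
      mul_div_cancel₀ q hp.ne', mul_right_comm, ← Real.rpow_add' (hw0 a) (by simp),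
      add_sub_cancel, Real.rpow_one]
  simp_rw [hsplit]
  exact integral_rpow_mul_rpow_le (fun a => mul_nonneg (hw0 a) (Real.rpow_nonneg (hf0 a) p)) hw0
    hwf hw (div_nonneg hq hp.le) (sub_nonneg.2 ((div_le_one hp).2 hqp)) (add_sub_cancel _ _)

end Lyapunov

theorem uscore_add_sub_uscore {Z : Type*} [MeasurableSpace Z] {ν : Measure Z} {β : ℝ}
    {g h f : Z → ℝ}
    (hgh : Integrable
      (fun z => -(g z + h z) * ((f z) ^ β - 1) / β + (f z) ^ (1 + β) / (1 + β)) ν)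
    (hg : Integrable (fun z => -(g z) * ((f z) ^ β - 1) / β + (f z) ^ (1 + β) / (1 + β)) ν)
    (hh : Integrable h ν) (hhf : Integrable (fun z => h z * f z ^ β) ν) :
    uscore ν β (fun z => g z + h z) f - uscore ν β g f
      = (∫ z, h z ∂ν - ∫ z, h z * f z ^ β ∂ν) / β := by
  rw [uscore, uscore, ← integral_sub hgh hg, ← integral_sub hh hhf, ← integral_div]
  congr 1 with z
  ring

theorem stmt8_general
    {X : Type*} [MeasurableSpace X] (ν : Measure X)
    (μstar η μθ : X → ℝ)
    (hηnn : ∀ x, 0 ≤ η x) (hμnn : ∀ x, 0 ≤ μθ x)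
    (β β0 ε α : ℝ) (hβ : 0 < β) (hββ0 : β ≤ β0)
    (hα : α = ∫ x, η x ∂ν)
    (hintη : Integrable η ν)
    (hintβ0 : Integrable (fun x => η x * μθ x ^ β0) ν)
    (hintβ : Integrable (fun x => η x * μθ x ^ β) ν)
    (hint1 : Integrable
      (fun x => -(μstar x + η x) * ((μθ x) ^ β - 1) / β + (μθ x) ^ (1 + β) / (1 + β)) ν)
    (hint2 : Integrable
      (fun x => -(μstar x) * ((μθ x) ^ β - 1) / β + (μθ x) ^ (1 + β) / (1 + β)) ν)
    (hconstraint : ∫ x, η x * μθ x ^ β0 ∂ν < ε) :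
    |uscore ν β (fun x => μstar x + η x) μθ - uscore ν β μstar μθ - α * β⁻¹|
      ≤ α ^ (1 - β / β0) * β⁻¹ * ε ^ (β / β0) := by
  have hβ0 : 0 < β0 := hβ.trans_le hββ0
  have hmoment_nonneg : ∀ p : ℝ, 0 ≤ ∫ x, η x * μθ x ^ p ∂ν := fun p =>
    integral_nonneg fun x => mul_nonneg (hηnn x) (Real.rpow_nonneg (hμnn x) p)
  rw [uscore_add_sub_uscore hint1 hint2 hintη hintβ, ← hα]
  calc |(α - ∫ x, η x * μθ x ^ β ∂ν) / β - α * β⁻¹|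
      = β⁻¹ * ∫ x, η x * μθ x ^ β ∂ν := by
        rw [div_eq_mul_inv, ← sub_mul, sub_sub_cancel_left, abs_mul, abs_neg,
          abs_of_nonneg (hmoment_nonneg β), abs_of_pos (inv_pos.2 hβ), mul_comm]
    _ ≤ β⁻¹ * ((∫ x, η x * μθ x ^ β0 ∂ν) ^ (β / β0) * α ^ (1 - β / β0)) := by
        gcongr
        rw [hα]
        exact integral_mul_rpow_le_lyapunov hηnn hμnn hβ0 hβ.le hββ0 hintη hintβ0
    _ ≤ β⁻¹ * (ε ^ (β / β0) * α ^ (1 - β / β0)) := by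
        have hα0 : 0 ≤ α := hα ▸ integral_nonneg hηnn
        gcongr
        exact hmoment_nonneg β0
    _ = α ^ (1 - β / β0) * β⁻¹ * ε ^ (β / β0) := by ring

/-- Population-level robustness bound: under contamination `g = μ⋆ + η⋆` with
`α = E_ν(η⋆) > 0`, `E_ν(η⋆ μ_θ^{β₀}) < ε`, and `0 < β ≤ β₀`,
`|u_β(g,μ_θ;ν) - u_β(μ⋆,μ_θ;ν) - α β⁻¹| ≤ α^{1-β/β₀} β⁻¹ ε^{β/β₀}`. -/
theorem stmt8
    {X : Type*} [MeasurableSpace X] (ν : Measure X) [IsProbabilityMeasure ν]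
    (μstar η μθ : X → ℝ)
    (hμsnn : ∀ x, 0 ≤ μstar x) (hηnn : ∀ x, 0 ≤ η x) (hμnn : ∀ x, 0 ≤ μθ x)
    (hηm : Measurable η) (hμm : Measurable μθ)
    (β β0 ε α : ℝ) (hβ : 0 < β) (hββ0 : β ≤ β0) (hε : 0 < ε)
    (hα : α = ∫ x, η x ∂ν) (hαpos : 0 < α)
    (hintη : Integrable η ν)
    (hintβ0 : Integrable (fun x => η x * μθ x ^ β0) ν)
    (hintβ : Integrable (fun x => η x * μθ x ^ β) ν)
    (hint1 : Integrable
      (fun x => -(μstar x + η x) * ((μθ x) ^ β - 1) / β + (μθ x) ^ (1 + β) / (1 + β)) ν)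
    (hint2 : Integrable
      (fun x => -(μstar x) * ((μθ x) ^ β - 1) / β + (μθ x) ^ (1 + β) / (1 + β)) ν)
    (hconstraint : ∫ x, η x * μθ x ^ β0 ∂ν < ε) :
    |uscore ν β (fun x => μstar x + η x) μθ - uscore ν β μstar μθ - α * β⁻¹|
      ≤ α ^ (1 - β / β0) * β⁻¹ * ε ^ (β / β0) :=
  stmt8_general ν μstar η μθ hηnn hμnn β β0 ε α hβ hββ0 hα hintη hintβ0 hintβ hint1 hint2
    hconstraint
end

section
/- Suppose additionally that the model is correctly specified: there exists $\theta_* \in \Theta_\varepsilon$ with $\mu_{\theta_*} = \mu_*$ ($\nu$-a.e.). Then for any $\theta \in \Theta_\varepsilon := \{\theta : E_\nu(\eta_* \mu_\theta^{\beta_0}) < \varepsilon\}$, $u_\beta(g,\mu_\theta;\nu) \ge u_\beta(g,\mu_{\theta_*};\nu) - 2\,\alpha^{1-\beta/\beta_0}\beta^{-1}\varepsilon^{\beta/\beta_0} + \big(u_\beta(\mu_*,\mu_\theta;\nu) - u_\beta(\mu_*,\mu_*;\nu)\big)$; in particular, any minimizer of the contaminated score $u_\beta(g,\cdot;\nu)$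 over $\Theta_\varepsilon$ has $\beta$-divergence from $\mu_*$ at most $2\,\alpha^{1-\beta/\beta_0}\beta^{-1}\varepsilon^{\beta/\beta_0}$. -/
open MeasureTheory

section WeightedHolder

variable {X : Type*} [MeasurableSpace X] {ν : Measure X} {η f : X → ℝ}

lemma memLp_ofReal_of_integrable_rpow {p : ℝ} (hp : 0 < p) (hf : AEStronglyMeasurable f ν)
    (hnn : ∀ x, 0 ≤ f x) (hint : Integrable (fun x => f x ^ p) ν) :
    MemLp f (ENNReal.ofReal p) ν := by
  refine (integrable_norm_rpow_iff hf (by simpa using hp) ENNReal.ofReal_ne_top).1 ?_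
  simpa only [ENNReal.toReal_ofReal hp.le, Real.norm_of_nonneg (hnn _)] using hint

/-- Hölder's inequality for the exponents `1/r` and `1/(1-r)`, applied to
`η f^r = (η f)^r · η^(1-r)`. -/
theorem integral_mul_rpow_le {r : ℝ} (hr₀ : 0 < r) (hr₁ : r ≤ 1)
    (hηnn : ∀ x, 0 ≤ η x) (hfnn : ∀ x, 0 ≤ f x)
    (hη : Integrable η ν) (hηf : Integrable (fun x => η x * f x) ν) :
    ∫ x, η x * f x ^ r ∂ν ≤ (∫ x, η x * f x ∂ν) ^ r * (∫ x, η x ∂ν) ^ (1 - r) := by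
  rcases hr₁.eq_or_lt with rfl | hr₁
  · simp
  have hηfnn : ∀ x, 0 ≤ η x * f x := fun x => mul_nonneg (hηnn x) (hfnn x)
  have hF : ∀ x, ((η x * f x) ^ r) ^ r⁻¹ = η x * f x := fun x => by
    rw [← Real.rpow_mul (hηfnn x), mul_inv_cancel₀ hr₀.ne', Real.rpow_one]
  have hG : ∀ x, (η x ^ (1 - r)) ^ (1 - r)⁻¹ = η x := fun x => by
    rw [← Real.rpow_mul (hηnn x), mul_inv_cancel₀ (sub_pos.2 hr₁).ne', Real.rpow_one]
  have hFG : ∀ x, (η x * f x) ^ r * η x ^ (1 - r) = η x * f x ^ r := fun x => by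
    rw [Real.mul_rpow (hηnn x) (hfnn x), mul_right_comm, ← Real.rpow_add' (hηnn x) (by simp),
      add_sub_cancel, Real.rpow_one]
  have hFLp : MemLp (fun x => (η x * f x) ^ r) (ENNReal.ofReal r⁻¹) ν :=
    memLp_ofReal_of_integrable_rpow (inv_pos.2 hr₀)
      (hηf.aemeasurable.pow_const r).aestronglyMeasurable
      (fun x => Real.rpow_nonneg (hηfnn x) r) (by simpa only [hF] using hηf)
  have hGLp : MemLp (fun x => η x ^ (1 - r)) (ENNReal.ofReal (1 - r)⁻¹) ν :=
    memLp_ofReal_of_integrable_rpow (inv_pos.2 (sub_pos.2 hr₁))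
      (hη.aemeasurable.pow_const _).aestronglyMeasurable
      (fun x => Real.rpow_nonneg (hηnn x) _) (by simpa only [hG] using hη)
  have h := integral_mul_le_Lp_mul_Lq_of_nonneg (Real.HolderConjugate.inv_one_sub_inv hr₀ hr₁)
    (.of_forall fun x => Real.rpow_nonneg (hηfnn x) r)
    (.of_forall fun x => Real.rpow_nonneg (hηnn x) _) hFLp hGLp
  simpa only [hF, hG, hFG, one_div, inv_inv] using h

theorem integral_mul_rpow_le_of_integral_mul_rpow_le {β β₀ ε : ℝ} (hβ : 0 < β) (hββ₀ : β ≤ β₀)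
    (hηnn : ∀ x, 0 ≤ η x) (hfnn : ∀ x, 0 ≤ f x)
    (hη : Integrable η ν) (hηf : Integrable (fun x => η x * f x ^ β₀) ν)
    (hε : ∫ x, η x * f x ^ β₀ ∂ν ≤ ε) :
    ∫ x, η x * f x ^ β ∂ν ≤ (∫ x, η x ∂ν) ^ (1 - β / β₀) * ε ^ (β / β₀) := by
  have hβ₀ : 0 < β₀ := hβ.trans_le hββ₀
  have hpow : ∀ x, (f x ^ β₀) ^ (β / β₀) = f x ^ β := fun x => by
    rw [← Real.rpow_mul (hfnn x), mul_div_cancel₀ _ hβ₀.ne']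
  have h := integral_mul_rpow_le (div_pos hβ hβ₀) ((div_le_one hβ₀).2 hββ₀) hηnn
    (fun x => Real.rpow_nonneg (hfnn x) β₀) hη hηf
  simp only [hpow] at h
  refine h.trans ?_
  rw [mul_comm]
  gcongr
  · exact Real.rpow_nonneg (integral_nonneg hηnn) _
  · exact integral_nonneg fun x => mul_nonneg (hηnn x) (Real.rpow_nonneg (hfnn x) β₀)

end WeightedHolder

section BetaScore

variable {X : Type*} [MeasurableSpace X] {ν : Measure X} {β : ℝ}

theorem uscore_add_eq {g η f : X → ℝ}
    (hη : Integrable η ν) (hηf : Integrable (fun x => η x * f x ^ β) ν)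
    (hg : Integrable (fun x => -(g x) * ((f x) ^ β - 1) / β + (f x) ^ (1 + β) / (1 + β)) ν) :
    uscore ν β (fun x => g x + η x) f
      = uscore ν β g f + (∫ x, η x ∂ν) / β - (∫ x, η x * f x ^ β ∂ν) / β := by
  have hsplit : (fun x => -(g x + η x) * (f x ^ β - 1) / β + f x ^ (1 + β) / (1 + β))
      = fun x => (-(g x) * (f x ^ β - 1) / β + f x ^ (1 + β) / (1 + β))
        + (η x - η x * f x ^ β) / β := by
    funext x; ring
  have hrest : Integrable (fun x => (η x - η x * f x ^ β) / β) ν := (hη.sub hηf).div_const β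
  rw [uscore, hsplit, integral_add hg hrest, integral_div,
    integral_sub hη hηf, uscore, sub_div, add_sub_assoc]

theorem uscore_congr_ae {g f f' : X → ℝ} (h : f =ᵐ[ν] f') : uscore ν β g f = uscore ν β g f' :=
  integral_congr_ae (h.mono fun x hx => by simp only [hx])

end BetaScore

theorem stmt9_general
    {X Θ : Type*} [MeasurableSpace X] (ν : Measure X)
    (μstar η : X → ℝ) (μ : Θ → X → ℝ)
    (hηnn : ∀ x, 0 ≤ η x)
    (hμnn : ∀ θ' x, 0 ≤ μ θ' x)
    (β β0 ε α : ℝ) (hβ : 0 < β) (hββ0 : β ≤ β0)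
    (hα : α = ∫ x, η x ∂ν)
    (g : X → ℝ) (hg : g = fun x => μstar x + η x)
    (θ θs : Θ)
    (hθ : ∫ x, η x * μ θ x ^ β0 ∂ν < ε)
    (hθs : ∫ x, η x * μ θs x ^ β0 ∂ν < ε)
    (hspec : μ θs =ᵐ[ν] μstar)
    (hintη : Integrable η ν)
    (hintβ0 : ∀ θ' : Θ, Integrable (fun x => η x * μ θ' x ^ β0) ν)
    (hintβ : ∀ θ' : Θ, Integrable (fun x => η x * μ θ' x ^ β) ν)
    (hints : ∀ θ' : Θ, Integrable
      (fun x => -(μstar x) * ((μ θ' x) ^ β - 1) / β + (μ θ' x) ^ (1 + β) / (1 + β)) ν) :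
    uscore ν β g (μ θ)
      ≥ uscore ν β g (μ θs) - 2 * α ^ (1 - β / β0) * β⁻¹ * ε ^ (β / β0)
        + (uscore ν β μstar (μ θ) - uscore ν β μstar μstar) ∧
    ((∀ θ' : Θ, (∫ x, η x * μ θ' x ^ β0 ∂ν < ε) →
        uscore ν β g (μ θ) ≤ uscore ν β g (μ θ')) →
      uscore ν β μstar (μ θ) - uscore ν β μstar μstar
        ≤ 2 * α ^ (1 - β / β0) * β⁻¹ * ε ^ (β / β0)) := by
  subst hg hα
  set R : Θ → ℝ := fun θ' => (∫ x, η x * μ θ' x ^ β ∂ν) / β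
  have hR : ∀ θ', ∫ x, η x * μ θ' x ^ β0 ∂ν < ε →
      0 ≤ R θ' ∧ R θ' ≤ (∫ x, η x ∂ν) ^ (1 - β / β0) * β⁻¹ * ε ^ (β / β0) := fun θ' hθ' => by
    refine ⟨div_nonneg (integral_nonneg fun x => mul_nonneg (hηnn x)
      (Real.rpow_nonneg (hμnn θ' x) β)) hβ.le, ?_⟩
    rw [mul_right_comm, ← div_eq_mul_inv]
    exact div_le_div_of_nonneg_right (integral_mul_rpow_le_of_integral_mul_rpow_le hβ hββ0
      hηnn (hμnn θ') hintη (hintβ0 θ') hθ'.le) hβ.le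
  have hdecomp : ∀ θ', uscore ν β (fun x => μstar x + η x) (μ θ')
      = uscore ν β μstar (μ θ') + (∫ x, η x ∂ν) / β - R θ' := fun θ' =>
    uscore_add_eq hintη (hintβ θ') (hints θ')
  have hspec' : uscore ν β μstar (μ θs) = uscore ν β μstar μstar := uscore_congr_ae hspec
  obtain ⟨hRθ₀, hRθ⟩ := hR θ hθ
  obtain ⟨hRθs₀, -⟩ := hR θs hθs
  refine ⟨by linarith [hdecomp θ, hdecomp θs], fun hmin => ?_⟩
  linarith [hdecomp θ, hdecomp θs, hmin θs hθs]

/-- Under correct specification (`μ_{θ⋆} = μ⋆` ν-a.e. with `θ⋆ ∈ Θ_ε`), for any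
`θ ∈ Θ_ε` the contaminated score satisfies
`u_β(g,μ_θ) ≥ u_β(g,μ_{θ⋆}) - 2 α^{1-β/β₀} β⁻¹ ε^{β/β₀} + D_β(μ⋆,μ_θ)`;
in particular any minimizer over `Θ_ε` has β-divergence from `μ⋆` at most
`2 α^{1-β/β₀} β⁻¹ ε^{β/β₀}`. -/
theorem stmt9
    {X Θ : Type*} [MeasurableSpace X] (ν : Measure X) [IsProbabilityMeasure ν]
    (μstar η : X → ℝ) (μ : Θ → X → ℝ)
    (hμsnn : ∀ x, 0 ≤ μstar x) (hηnn : ∀ x, 0 ≤ η x)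
    (hμnn : ∀ θ' x, 0 ≤ μ θ' x)
    (hηm : Measurable η) (hμsm : Measurable μstar) (hμm : ∀ θ', Measurable (μ θ'))
    (β β0 ε α : ℝ) (hβ : 0 < β) (hββ0 : β ≤ β0) (hε : 0 < ε)
    (hα : α = ∫ x, η x ∂ν) (hαpos : 0 < α)
    (g : X → ℝ) (hg : g = fun x => μstar x + η x)
    (θ θs : Θ)
    (hθ : ∫ x, η x * μ θ x ^ β0 ∂ν < ε)
    (hθs : ∫ x, η x * μ θs x ^ β0 ∂ν < ε)
    (hspec : μ θs =ᵐ[ν] μstar)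
    (hintη : Integrable η ν)
    (hintβ0 : ∀ θ' : Θ, Integrable (fun x => η x * μ θ' x ^ β0) ν)
    (hintβ : ∀ θ' : Θ, Integrable (fun x => η x * μ θ' x ^ β) ν)
    (hintg : ∀ θ' : Θ, Integrable
      (fun x => -(g x) * ((μ θ' x) ^ β - 1) / β + (μ θ' x) ^ (1 + β) / (1 + β)) ν)
    (hints : ∀ θ' : Θ, Integrable
      (fun x => -(μstar x) * ((μ θ' x) ^ β - 1) / β + (μ θ' x) ^ (1 + β) / (1 + β)) ν)
    (hintss : Integrable
      (fun x => -(μstar x) * ((μstar x) ^ β - 1) / β + (μstar x) ^ (1 + β) / (1 + β)) ν) :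
    uscore ν β g (μ θ)
      ≥ uscore ν β g (μ θs) - 2 * α ^ (1 - β / β0) * β⁻¹ * ε ^ (β / β0)
        + (uscore ν β μstar (μ θ) - uscore ν β μstar μstar) ∧
    ((∀ θ' : Θ, (∫ x, η x * μ θ' x ^ β0 ∂ν < ε) →
        uscore ν β g (μ θ) ≤ uscore ν β g (μ θ')) →
      uscore ν β μstar (μ θ) - uscore ν β μstar μstar
        ≤ 2 * α ^ (1 - β / β0) * β⁻¹ * ε ^ (β / β0)) :=
  stmt9_general ν μstar η μ hηnn hμnn β β0 ε α hβ hββ0 hα g hg θ θs hθ hθs hspec hintη hintβ0 hintβ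
    hints
end
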